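/- If 0 < x_1 < ... < x_{n+1} < 1, the diagonal pivots of the Neville elimination of the Bernstein–Vandermonde matrix A are p_{i,i} = C(n,i-1)·(1-x_i)^{n-i+1}·Π_{k<i}(x_i - x_k) / Π_{k=1}^{i-1}(1-x_k), for i = 1, ..., n+1; equivalently, p_{i,i} = det A[1..i | 1..i] / det A[1..i-1 | 1..i-1], the ratio of consecutive leading principal minors. -/

import Mathlib

/-!
Writing `t r = y r / (1 - y r)`, the Bernstein–Vandermonde matrix factors as
`diag ((1 - y r) ^ n) * vandermonde t * diag (C(n, c))`, and this factorization restricts to every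
leading principal block. Hence the `m`-th leading minor is a product over `s < m` of
`C(n, s) * (1 - y s) ^ n * ∏_{r < s} (t s - t r)`, so consecutive minors differ by exactly one
factor, which clears denominators to the closed formula.
-/

open Finset Matrix

theorem det_vandermonde_eq_prod_range {R : Type*} [CommRing R] (t : ℕ → R) (m : ℕ) :
    (vandermonde fun r : Fin m => t r).det = ∏ s ∈ range m, ∏ r ∈ range s, (t s - t r) := by
  rw [det_vandermonde, prod_comm' (t' := univ) (s' := fun j => Iio j)
    (fun i j => by simp [and_comm]),
    ← Fin.prod_univ_eq_prod_range (fun s => ∏ r ∈ range s, (t s - t r))]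
  refine Fintype.prod_congr _ _ fun s => ?_
  rw [← Nat.Iio_eq_range, ← Fin.map_valEmbedding_Iio, prod_map]
  rfl

section

variable {K : Type*} [Field K]

def bernsteinVandermonde (n : ℕ) (y : ℕ → K) (m : ℕ) : Matrix (Fin m) (Fin m) K :=
  of fun r c => (n.choose c : K) * (1 - y r) ^ (n - c) * y r ^ (c : ℕ)

theorem bernsteinVandermonde_eq_diagonal_mul_vandermonde_mul_diagonal {n m : ℕ} {y : ℕ → K}
    (hm : m ≤ n + 1) (hy : ∀ r < m, y r ≠ 1) :
    bernsteinVandermonde n y m =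
      diagonal (fun r : Fin m => (1 - y r) ^ n) * vandermonde (fun r : Fin m => y r / (1 - y r)) *
        diagonal (fun c : Fin m => (n.choose c : K)) := by
  ext r c
  have hr : 1 - y r ≠ 0 := sub_ne_zero.mpr (hy r r.isLt).symm
  have hpow : (1 - y r) ^ n = (1 - y r) ^ (n - c) * (1 - y r) ^ (c : ℕ) := by
    rw [← pow_add, Nat.sub_add_cancel (by omega)]
  rw [mul_diagonal, diagonal_mul, vandermonde_apply, bernsteinVandermonde, of_apply, hpow, div_pow]
  field_simp

theorem det_bernsteinVandermonde {n m : ℕ} {y : ℕ → K} (hm : m ≤ n + 1) (hy : ∀ r < m, y r ≠ 1) :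
    (bernsteinVandermonde n y m).det =
      ∏ s ∈ range m, (n.choose s : K) * (1 - y s) ^ n *
        ∏ r ∈ range s, (y s / (1 - y s) - y r / (1 - y r)) := by
  rw [bernsteinVandermonde_eq_diagonal_mul_vandermonde_mul_diagonal hm hy, det_mul, det_mul,
    det_diagonal, det_diagonal, det_vandermonde_eq_prod_range (fun r => y r / (1 - y r)),
    Fin.prod_univ_eq_prod_range (fun r => (1 - y r) ^ n),
    Fin.prod_univ_eq_prod_range (fun c => (n.choose c : K)), prod_mul_distrib, prod_mul_distrib]
  ring

theorem div_one_sub_injOn {y : ℕ → K} {s : Set ℕ} (hy : ∀ r ∈ s, y r ≠ 1) (hinj : s.InjOn y) :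
    s.InjOn fun r => y r / (1 - y r) := by
  intro a ha b hb h
  have ha' : 1 - y a ≠ 0 := sub_ne_zero.mpr (hy a ha).symm
  have hb' : 1 - y b ≠ 0 := sub_ne_zero.mpr (hy b hb).symm
  refine hinj ha hb ?_
  rw [div_eq_div_iff ha' hb'] at h
  linear_combination h

theorem one_sub_pow_mul_prod_div_one_sub_sub_div_one_sub {n m : ℕ} {y : ℕ → K} (hm : m ≤ n)
    (hy : ∀ r ≤ m, y r ≠ 1) :
    (1 - y m) ^ n * ∏ r ∈ range m, (y m / (1 - y m) - y r / (1 - y r)) =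
      (1 - y m) ^ (n - m) * (∏ r ∈ range m, (y m - y r)) / ∏ r ∈ range m, (1 - y r) := by
  have hne : ∀ r ≤ m, 1 - y r ≠ 0 := fun r hr => sub_ne_zero.mpr (hy r hr).symm
  have hfactor : ∀ r ∈ range m,
      y m / (1 - y m) - y r / (1 - y r) = (y m - y r) / ((1 - y m) * (1 - y r)) := by
    intro r hr
    have := hne r (mem_range.mp hr).le
    have := hne m le_rfl
    field_simp
    ring
  have hden : ∏ r ∈ range m, (1 - y r) ≠ 0 :=
    prod_ne_zero_iff.mpr fun r hr => hne r (mem_range.mp hr).le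
  rw [prod_congr rfl hfactor, prod_div_distrib, prod_mul_distrib, prod_const, card_range,
    ← Nat.sub_add_cancel hm, pow_add, Nat.add_sub_cancel]
  have := pow_ne_zero m (hne m le_rfl)
  field_simp

theorem det_bernsteinVandermonde_ne_zero [CharZero K] {n m : ℕ} {y : ℕ → K} (hm : m ≤ n + 1)
    (hy : ∀ r < m, y r ≠ 1) (hinj : Set.InjOn y (Set.Iio m)) :
    (bernsteinVandermonde n y m).det ≠ 0 := by
  have hinj' := div_one_sub_injOn hy hinj
  rw [det_bernsteinVandermonde hm hy]
  refine prod_ne_zero_iff.mpr fun s hs => ?_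
  have hs : s < m := mem_range.mp hs
  refine mul_ne_zero (mul_ne_zero ?_ (pow_ne_zero _ (sub_ne_zero.mpr (hy s hs).symm)))
    (prod_ne_zero_iff.mpr fun r hr => sub_ne_zero.mpr fun h => ?_)
  · exact Nat.cast_ne_zero.mpr (Nat.choose_pos (by omega)).ne'
  · have hr : r < s := mem_range.mp hr
    exact hr.ne' (hinj' (Set.mem_Iio.mpr hs) (Set.mem_Iio.mpr (hr.trans hs)) h)

theorem det_bernsteinVandermonde_succ_div [CharZero K] {n m : ℕ} {y : ℕ → K} (hm : m ≤ n)
    (hy : ∀ r ≤ m, y r ≠ 1) (hinj : Set.InjOn y (Set.Iio m)) :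
    (bernsteinVandermonde n y (m + 1)).det / (bernsteinVandermonde n y m).det =
      (n.choose m : K) * (1 - y m) ^ (n - m) * (∏ r ∈ range m, (y m - y r)) /
        ∏ r ∈ range m, (1 - y r) := by
  have hy' : ∀ r < m, y r ≠ 1 := fun r hr => hy r hr.le
  rw [det_bernsteinVandermonde (by omega) fun r hr => hy r (Nat.lt_succ_iff.mp hr), prod_range_succ,
    ← det_bernsteinVandermonde (by omega) hy',
    mul_div_cancel_left₀ _ (det_bernsteinVandermonde_ne_zero (by omega) hy' hinj), mul_assoc,
    one_sub_pow_mul_prod_div_one_sub_sub_div_one_sub hm hy]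
  ring

end

/-- The diagonal pivots of the Neville elimination of the Bernstein–Vandermonde matrix:
the ratio of consecutive leading principal minors equals the closed formula. -/
theorem bernstein_vandermonde_diagonal_pivots (n : ℕ) (x : ℕ → ℝ)
    (hx : ∀ k, 1 ≤ k → k ≤ n + 1 → 0 < x k ∧ x k < 1)
    (hmono : ∀ k l, 1 ≤ k → k < l → l ≤ n + 1 → x k < x l)
    (i : ℕ) (hi1 : 1 ≤ i) (hi2 : i ≤ n + 1) :
    (Matrix.of fun r c : Fin i =>
        (n.choose c : ℝ) * (1 - x ((r : ℕ) + 1)) ^ (n - (c : ℕ)) * x ((r : ℕ) + 1) ^ (c : ℕ)).det /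
      (Matrix.of fun r c : Fin (i - 1) =>
        (n.choose c : ℝ) * (1 - x ((r : ℕ) + 1)) ^ (n - (c : ℕ)) * x ((r : ℕ) + 1) ^ (c : ℕ)).det =
      (n.choose (i - 1) : ℝ) * (1 - x i) ^ (n + 1 - i) *
        (∏ k ∈ Finset.Ico 1 i, (x i - x k)) / ∏ k ∈ Finset.Icc 1 (i - 1), (1 - x k) := by
  obtain ⟨m, rfl⟩ : ∃ m, i = m + 1 := ⟨i - 1, by omega⟩
  have hy : ∀ r ≤ m, x (r + 1) ≠ 1 := fun r hr => (hx (r + 1) (by omega) (by omega)).2.ne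
  have hinj : Set.InjOn (fun r => x (r + 1)) (Set.Iio m) :=
    StrictMonoOn.injOn fun r _ s hs hrs =>
      hmono (r + 1) (s + 1) (by omega) (by omega) (by have := Set.mem_Iio.mp hs; omega)
  rw [prod_Ico_eq_prod_range, ← Ico_add_one_right_eq_Icc, prod_Ico_eq_prod_range]
  simp only [Nat.add_sub_cancel, Nat.add_sub_add_right, add_comm 1]
  exact det_bernsteinVandermonde_succ_div (by omega) hy hinj
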